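/- Let G be a simple graph with list chromatic number χ_ℓ, let 1 ≤ r ≤ s ≤ χ_ℓ, and let L_s be the constant s-list assignment with L_s(v) = {1,…,s} for all v. Then λ_r(G) ≥ (1 − (1 − 1/s)^r) · λ_{L_s}(G). -/

import Mathlib

open SimpleGraph

/-- `c` properly colors each vertex of `S` from its list `L`. -/
def IsPartialListColoring {V : Type*} (G : SimpleGraph V) (L : V → Finset ℕ)
    (S : Set V) (c : V → ℕ) : Prop :=
  (∀ v ∈ S, c v ∈ L v) ∧ ∀ u ∈ S, ∀ v ∈ S, G.Adj u v → c u ≠ c v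

/-- `λ_L(G)`: the maximum number of vertices properly colorable from the lists of `L`. -/
noncomputable def lamL {V : Type*} (G : SimpleGraph V) (L : V → Finset ℕ) : ℕ :=
  sSup {k | ∃ (S : Finset V) (c : V → ℕ), S.card = k ∧ IsPartialListColoring G L S c}

/-- `λ_t(G)`: the minimum of `λ_L(G)` over all `t`-list assignments `L`. -/
noncomputable def lam {V : Type*} (G : SimpleGraph V) (t : ℕ) : ℕ :=
  sInf {m | ∃ L : V → Finset ℕ, (∀ v, (L v).card = t) ∧ lamL G L = m}

/-- `G` admits a full proper coloring from the lists of `L`. -/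
def ListColorable {V : Type*} (G : SimpleGraph V) (L : V → Finset ℕ) : Prop :=
  ∃ c : V → ℕ, (∀ v, c v ∈ L v) ∧ ∀ u v, G.Adj u v → c u ≠ c v

/-- The list chromatic number of `G`. -/
noncomputable def listChromaticNumber {V : Type*} (G : SimpleGraph V) : ℕ :=
  sInf {k | ∀ L : V → Finset ℕ, (∀ v, (L v).card = k) → ListColorable G L}

/-!
Fix an optimal coloring `c` of `λ_{L_s}(G)` vertices from the palette `K = {1,…,s}` and an
arbitrary `r`-list assignment `L`. Map every color occurring in some list to a uniformly random
color of `K`. A vertex `v` whose image list `ψ(L v)` contains `c v` can be recolored by a preimage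
of `c v` in `L v`; adjacent recolored vertices keep distinct colors because their images differ.
Each vertex is recolorable with probability `1 - (1 - 1/s)^r`, so some `ψ` recolors at least that
fraction of the `λ_{L_s}(G)` colored vertices, all from `L`.
-/

open Finset

lemma card_filter_forall_mem_ne {α β : Type*} [Fintype α] [DecidableEq α] [Fintype β]
    [DecidableEq β] (T : Finset α) (k : β) :
    (#{ψ : α → β | ∀ a ∈ T, ψ a ≠ k} : ℝ) =
      (1 - 1 / Fintype.card β) ^ #T * Fintype.card β ^ Fintype.card α := by
  have hβ : (Fintype.card β : ℝ) ≠ 0 := by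
    have : Nonempty β := ⟨k⟩
    exact_mod_cast Fintype.card_ne_zero
  have hpi : ({ψ : α → β | ∀ a ∈ T, ψ a ≠ k} : Finset (α → β)) =
      Fintype.piFinset fun a => if a ∈ T then univ.erase k else univ := by
    ext ψ
    simp only [mem_filter, mem_univ, true_and, Fintype.mem_piFinset]
    refine forall_congr' fun a => ?_
    split_ifs with ha <;> simp [ha]
  have hfactor : ∀ a : α, (#(if a ∈ T then univ.erase k else univ) : ℝ) =
      Fintype.card β * if a ∈ T then 1 - 1 / (Fintype.card β : ℝ) else 1 := by
    intro a
    split_ifs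
    · rw [card_erase_of_mem (mem_univ k), card_univ,
        Nat.cast_sub (Fintype.card_pos_iff.2 ⟨k⟩)]
      field_simp
      ring
    · simp
  rw [hpi, Fintype.card_piFinset, Nat.cast_prod, prod_congr rfl fun a _ => hfactor a,
    prod_mul_distrib, prod_ite_mem, univ_inter, prod_const, prod_const, card_univ, mul_comm]

lemma card_filter_exists_mem_eq {α β : Type*} [Fintype α] [DecidableEq α] [Fintype β]
    [DecidableEq β] (T : Finset α) (k : β) :
    (#{ψ : α → β | ∃ a ∈ T, ψ a = k} : ℝ) =
      (1 - (1 - 1 / Fintype.card β) ^ #T) * Fintype.card β ^ Fintype.card α := by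
  have hsplit := card_filter_add_card_filter_not (s := (univ : Finset (α → β)))
    fun ψ => ∃ a ∈ T, ψ a = k
  simp only [not_exists, not_and] at hsplit
  rw [card_univ, Fintype.card_fun] at hsplit
  have hsplitR : (#{ψ : α → β | ∃ a ∈ T, ψ a = k} : ℝ) + #{ψ : α → β | ∀ a ∈ T, ψ a ≠ k} =
      Fintype.card β ^ Fintype.card α := by
    exact_mod_cast hsplit
  rw [card_filter_forall_mem_ne] at hsplitR
  linarith

lemma card_mul_le_card_mul_of_bounds {Ω α : Type*} [Fintype Ω] (S : Finset α)
    (P : Ω → α → Prop) [∀ ω a, Decidable (P ω a)] {p m : ℝ}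
    (hp : ∀ v ∈ S, p ≤ #{ω | P ω v}) (hm : ∀ ω, (#{v ∈ S | P ω v} : ℝ) ≤ m) :
    #S * p ≤ Fintype.card Ω * m :=
  calc (#S : ℝ) * p = ∑ v ∈ S, p := by rw [sum_const, nsmul_eq_mul]
    _ ≤ ∑ v ∈ S, (#{ω | P ω v} : ℝ) := sum_le_sum hp
    _ = ∑ ω, (#{v ∈ S | P ω v} : ℝ) := by
      simp only [card_filter, Nat.cast_sum]
      exact sum_comm
    _ ≤ ∑ _ω : Ω, m := sum_le_sum fun ω _ => hm ω
    _ = Fintype.card Ω * m := by rw [sum_const, nsmul_eq_mul, card_univ]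

section ListColoring

variable {V : Type*}

lemma bddAbove_partialListColoring_cards [Fintype V] (G : SimpleGraph V) (L : V → Finset ℕ) :
    BddAbove {k | ∃ (S : Finset V) (c : V → ℕ), #S = k ∧ IsPartialListColoring G L S c} :=
  ⟨Fintype.card V, by rintro k ⟨S, c, rfl, -⟩; exact S.card_le_univ⟩

lemma card_le_lamL [Fintype V] (G : SimpleGraph V) {L : V → Finset ℕ} {S : Finset V}
    {c : V → ℕ} (h : IsPartialListColoring G L S c) : #S ≤ lamL G L :=
  le_csSup (bddAbove_partialListColoring_cards G L) ⟨S, c, rfl, h⟩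

lemma exists_isPartialListColoring_card_eq_lamL [Fintype V] (G : SimpleGraph V)
    (L : V → Finset ℕ) :
    ∃ (S : Finset V) (c : V → ℕ), #S = lamL G L ∧ IsPartialListColoring G L S c :=
  Nat.sSup_mem (s := {k | ∃ (S : Finset V) (c : V → ℕ), #S = k ∧ IsPartialListColoring G L S c})
    ⟨0, ∅, fun _ => 0, by simp [IsPartialListColoring]⟩
    (bddAbove_partialListColoring_cards G L)

lemma exists_lamL_eq_lam (G : SimpleGraph V) (t : ℕ) :
    ∃ L : V → Finset ℕ, (∀ v, #(L v) = t) ∧ lamL G L = lam G t :=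
  Nat.sInf_mem (s := {m | ∃ L : V → Finset ℕ, (∀ v, #(L v) = t) ∧ lamL G L = m})
    ⟨_, fun _ => range t, fun _ => card_range t, rfl⟩

lemma exists_isPartialListColoring_of_lift (G : SimpleGraph V) (L : V → Finset ℕ) {T : Set V}
    {c : V → ℕ} (hc : ∀ u ∈ T, ∀ v ∈ T, G.Adj u v → c u ≠ c v) (ψ : ℕ → ℕ)
    (hlift : ∀ v ∈ T, ∃ a ∈ L v, ψ a = c v) :
    ∃ c' : V → ℕ, IsPartialListColoring G L T c' := by
  choose! pre hpre_mem hpre_eq using hlift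
  refine ⟨pre, hpre_mem, fun u hu v hv hadj hsame => hc u hu v hv hadj ?_⟩
  rw [← hpre_eq u hu, ← hpre_eq v hv, hsame]

theorem mul_lamL_const_le_lamL [Fintype V] (G : SimpleGraph V) (K : Finset ℕ)
    {r : ℕ} {L : V → Finset ℕ} (hL : ∀ v, #(L v) = r) :
    (1 - (1 - 1 / (#K : ℝ)) ^ r) * lamL G (fun _ => K) ≤ lamL G L := by
  classical
  rcases K.eq_empty_or_nonempty with rfl | hK
  · simp -- `1 / 0 = 0` makes the factor vanish
  obtain ⟨S, c, hS, hc⟩ := exists_isPartialListColoring_card_eq_lamL G (fun _ => K)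
  set C := univ.biUnion L
  have hLC : ∀ v, L v ⊆ C := fun v => subset_biUnion_of_mem L (mem_univ v)
  let extend (ψ : C → K) (a : ℕ) : ℕ := if h : a ∈ C then ψ ⟨a, h⟩ else 0
  let good (ψ : C → K) (v : V) : Prop := ∃ a ∈ (L v).subtype (· ∈ C), (ψ a : ℕ) = c v
  have hgood_card : ∀ v ∈ S, (1 - (1 - 1 / (#K : ℝ)) ^ r) * #K ^ #C ≤ #{ψ | good ψ v} := by
    intro v hv
    have hgood : ∀ ψ, good ψ v ↔ ∃ a ∈ (L v).subtype (· ∈ C), ψ a = ⟨c v, hc.1 v hv⟩ := by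
      simp [good, Subtype.ext_iff]
    simp_rw [hgood, card_filter_exists_mem_eq, card_subtype, filter_true_of_mem (hLC v), hL,
      Fintype.card_coe, le_refl]
  have hgood_lamL : ∀ ψ, (#{v ∈ S | good ψ v} : ℝ) ≤ lamL G L := by
    intro ψ
    set T : Finset V := {v ∈ S | good ψ v}
    have hproper : ∀ u ∈ (T : Set V), ∀ v ∈ (T : Set V), G.Adj u v → c u ≠ c v :=
      fun u hu v hv => hc.2 u (mem_filter.1 hu).1 v (mem_filter.1 hv).1
    have hlift : ∀ v ∈ (T : Set V), ∃ a ∈ L v, extend ψ a = c v := by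
      intro v hv
      obtain ⟨a, ha, hψa⟩ := (mem_filter.1 hv).2
      exact ⟨a, mem_subtype.1 ha, by simp [extend, hψa]⟩
    obtain ⟨c', hc'⟩ := exists_isPartialListColoring_of_lift G L hproper (extend ψ) hlift
    exact_mod_cast card_le_lamL G hc'
  have hcount := card_mul_le_card_mul_of_bounds S good hgood_card hgood_lamL
  rw [Fintype.card_fun, Fintype.card_coe, Fintype.card_coe, hS] at hcount
  have hN : (0 : ℝ) < #K ^ #C := pow_pos (by exact_mod_cast hK.card_pos) _
  push_cast at hcount
  exact le_of_mul_le_mul_right (by linarith) hN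

end ListColoring

theorem lam_ge_bound_of_constant_lists_general {V : Type*} [Fintype V] (G : SimpleGraph V)
    (r s : ℕ) :
    (1 - (1 - 1 / (s : ℝ)) ^ r) * (lamL G (fun _ => Finset.Icc 1 s) : ℝ)
      ≤ (lam G r : ℝ) := by
  obtain ⟨L, hL, hLlam⟩ := exists_lamL_eq_lam G r
  rw [← hLlam]
  simpa using mul_lamL_const_le_lamL G (Icc 1 s) hL

theorem lam_ge_bound_of_constant_lists {V : Type*} [Fintype V] (G : SimpleGraph V)
    (r s : ℕ) (hr : 1 ≤ r) (hrs : r ≤ s) (hs : s ≤ listChromaticNumber G) :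
    (1 - (1 - 1 / (s : ℝ)) ^ r) * (lamL G (fun _ => Finset.Icc 1 s) : ℝ)
      ≤ (lam G r : ℝ) :=
  lam_ge_bound_of_constant_lists_general G r s
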